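/- arXiv:2201.05704 — 2 statements merged into one kernel-verified Lean document; each statement's English description precedes it below -/
import Mathlib

section
/- For every integer k ≠ 0, the exponential Fourier coefficients satisfy M̂(k) = (4/(kπ)) sin(kπ/2) · conj(f̂(k)) − 4 |f̂(k)|². -/
/-!
`M` is the cross-correlation of `f` with `g = 𝟙_[-1,1] - f`; after reflecting `f` it becomes a
convolution, so its Fourier transform is `conj (𝓕 f) * 𝓕 g`. As `f` and `M` vanish outside
`[-2, 2]`, their Fourier coefficients on `[-2, 2]` are `1/4` times samples of the Fourier
transform at `k / 4`, and `𝓕 g = 𝓕 𝟙_[-1,1] - 𝓕 f` with `𝓕 𝟙_[-1,1] (ξ) = sin (2πξ) / (πξ)`.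
-/

open Real MeasureTheory Set
open FourierTransform ComplexConjugate

theorem intervalIntegral_eq_integral_of_forall_notMem {E : Type*} [NormedAddCommGroup E]
    [NormedSpace ℝ E] {f : ℝ → E} {a b : ℝ} (hab : a ≤ b) (hf : ∀ x ∉ Icc a b, f x = 0) :
    ∫ x in a..b, f x = ∫ x, f x := by
  rw [intervalIntegral.integral_of_le hab, ← integral_Icc_eq_integral_Ioc,
    setIntegral_eq_integral_of_forall_compl_eq_zero hf]

theorem integrable_of_intervalIntegral_ne_zero {E : Type*} [NormedAddCommGroup E]
    [NormedSpace ℝ E] {f : ℝ → E} {a b : ℝ} (hab : a ≤ b) (hf : ∀ x ∉ Icc a b, f x = 0)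
    (h : ∫ x in a..b, f x ≠ 0) : Integrable f :=
  (integrableOn_iff_integrable_of_support_subset (Function.support_subset_iff'.2 hf)).1
    ((intervalIntegrable_iff_integrableOn_Icc_of_le hab).1
      (intervalIntegral.intervalIntegrable_of_integral_ne_zero h))

noncomputable def crossCorrelation (f g : ℝ → ℂ) (x : ℝ) : ℂ :=
  ∫ t, conj (f t) * g (x + t)

theorem crossCorrelation_eq_convolution (f g : ℝ → ℂ) :
    crossCorrelation f g =
      convolution (fun t ↦ conj (f (-t))) g (ContinuousLinearMap.mul ℂ ℂ) volume := by
  ext x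
  rw [convolution_mul, crossCorrelation, ← integral_neg_eq_self]
  simp only [sub_eq_add_neg]

theorem crossCorrelation_eq_zero_of_notMem_Icc {f g : ℝ → ℂ} {a b c d x : ℝ}
    (hf : ∀ t ∉ Icc a b, f t = 0) (hg : ∀ u ∉ Icc c d, g u = 0) (hx : x ∉ Icc (c - b) (d - a)) :
    crossCorrelation f g x = 0 := by
  refine integral_eq_zero_of_ae (.of_forall fun t ↦ ?_)
  by_cases ht : t ∈ Icc a b
  · have : x + t ∉ Icc c d := fun h ↦ hx ⟨by linarith [h.1, ht.2], by linarith [h.2, ht.1]⟩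
    simp [hg _ this]
  · simp [hf t ht]

namespace Real

theorem fourier_sub {V E : Type*} [NormedAddCommGroup V] [InnerProductSpace ℝ V]
    [MeasurableSpace V] [BorelSpace V] [FiniteDimensional ℝ V]
    [NormedAddCommGroup E] [NormedSpace ℂ E] {u v : V → E}
    (hu : Integrable u) (hv : Integrable v) (ξ : V) : 𝓕 (u - v) ξ = 𝓕 u ξ - 𝓕 v ξ := by
  simp only [fourier_eq, Pi.sub_apply, smul_sub]
  exact integral_sub ((fourierIntegral_convergent_iff ξ).2 hu)
    ((fourierIntegral_convergent_iff ξ).2 hv)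

theorem fourier_conj_comp_neg (f : ℝ → ℂ) (ξ : ℝ) :
    𝓕 (fun x ↦ conj (f (-x))) ξ = conj (𝓕 f ξ) := by
  simp only [fourier_real_eq, Circle.smul_def, smul_eq_mul, ← integral_conj, map_mul]
  rw [← integral_neg_eq_self]
  congr 1 with x
  simp [← Circle.coe_inv_eq_conj, ← AddChar.map_neg_eq_inv]

theorem fourier_crossCorrelation {f g : ℝ → ℂ} (hf : Integrable f) (hg : Integrable g)
    (ξ : ℝ) : 𝓕 (crossCorrelation f g) ξ = conj (𝓕 f ξ) * 𝓕 g ξ := by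
  have hf' : Integrable (fun t ↦ conj (f (-t))) :=
    (Complex.conjCLE.integrable_comp_iff).2 hf.comp_neg
  rw [crossCorrelation_eq_convolution, fourier_mul_convolution_eq hf' hg, fourier_conj_comp_neg]

theorem fourier_eq_intervalIntegral {h : ℝ → ℂ} {a b : ℝ} (hab : a ≤ b)
    (hh : ∀ x ∉ Icc a b, h x = 0) (ξ : ℝ) :
    𝓕 h ξ = ∫ x in a..b, Complex.exp (-(2 * π * Complex.I * ξ) * x) * h x := by
  rw [intervalIntegral_eq_integral_of_forall_notMem hab fun x hx ↦ by simp [hh x hx],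
    fourier_real_eq_integral_exp_smul]
  congr 1 with x
  rw [smul_eq_mul]
  congr 2
  push_cast
  ring

theorem intervalIntegral_exp_mul_eq_fourier {h : ℝ → ℂ} {T : ℝ} (hT : 0 ≤ T)
    (hh : ∀ x ∉ Icc (-T) T, h x = 0) (k : ℤ) :
    ∫ x in -T..T, Complex.exp (-(π * Complex.I / T) * k * x) * h x = 𝓕 h (k / (2 * T)) := by
  rw [fourier_eq_intervalIntegral (by linarith) hh]
  congr 1 with x
  congr 2
  push_cast
  ring

theorem fourier_indicator_Icc {a ξ : ℝ} (ha : 0 ≤ a) (hξ : ξ ≠ 0) :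
    𝓕 ((Icc (-a) a).indicator (1 : ℝ → ℂ)) ξ = ((sin (2 * π * a * ξ) / (π * ξ) : ℝ) : ℂ) := by
  set c : ℂ := -(2 * π * Complex.I * ξ)
  have hc : c ≠ 0 := by simp [c, hξ, pi_ne_zero]
  have hsinh : Complex.exp (c * a) - Complex.exp (c * ↑(-a)) =
      2 * Complex.sinh (((-(2 * π * a * ξ) : ℝ) : ℂ) * Complex.I) := by
    rw [Complex.sinh]
    simp only [c]
    push_cast
    ring_nf
  rw [fourier_eq_intervalIntegral (by linarith) fun x hx ↦ indicator_of_notMem hx _,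
    intervalIntegral.integral_congr (g := fun x : ℝ ↦ Complex.exp (c * x)) fun x hx ↦ by
      rw [uIcc_of_le (by linarith)] at hx
      simp [indicator_of_mem hx, c],
    integral_exp_mul_complex hc, hsinh, Complex.sinh_mul_I, ← Complex.ofReal_sin, sin_neg]
  have hπ : (π : ℂ) ≠ 0 := by exact_mod_cast pi_ne_zero
  have hξ' : (ξ : ℂ) ≠ 0 := by exact_mod_cast hξ
  push_cast
  field_simp
  simp only [c]
  ring

theorem fourier_crossCorrelation_indicator_sub {f : ℝ → ℂ} (hf : Integrable f) {a ξ : ℝ}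
    (ha : 0 ≤ a) (hξ : ξ ≠ 0) :
    𝓕 (crossCorrelation f ((Icc (-a) a).indicator 1 - f)) ξ =
      conj (𝓕 f ξ) * ((sin (2 * π * a * ξ) / (π * ξ) : ℝ) - 𝓕 f ξ) := by
  have hI : Integrable ((Icc (-a) a).indicator (1 : ℝ → ℂ)) :=
    (integrable_indicator_iff measurableSet_Icc).2 (integrableOn_const measure_Icc_lt_top.ne)
  rw [fourier_crossCorrelation hf (hI.sub hf), fourier_sub hI hf, fourier_indicator_Icc ha hξ]

end Real

theorem exp_fourier_identity_general (f g M : ℝ → ℝ)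
    (hf_supp : ∀ x, x ∉ Icc (-1:ℝ) 1 → f x = 0)
    (hf_int : ∫ x in (-1:ℝ)..1, f x = 1)
    (hg : ∀ x, g x = if x ∈ Icc (-1:ℝ) 1 then 1 - f x else 0)
    (hM : ∀ x, M x = ∫ t in (-1:ℝ)..1, f t * g (x + t))
    (fhat Mhat : ℤ → ℂ)
    (hfhat : ∀ k : ℤ, fhat k =
      (1/4 : ℂ) * ∫ x in (-2:ℝ)..2, Complex.exp (-(Real.pi * Complex.I / 2) * k * x) * (f x : ℂ))
    (hMhat : ∀ k : ℤ, Mhat k =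
      (1/4 : ℂ) * ∫ x in (-2:ℝ)..2, Complex.exp (-(Real.pi * Complex.I / 2) * k * x) * (M x : ℂ)) :
    ∀ k : ℤ, k ≠ 0 →
      Mhat k = ((4 / ((k : ℝ) * Real.pi) * Real.sin ((k : ℝ) * Real.pi / 2) : ℝ) : ℂ)
          * (starRingEnd ℂ) (fhat k) - 4 * ((‖fhat k‖)^2 : ℝ) := by
  intro k hk
  set F : ℝ → ℂ := fun x ↦ (f x : ℂ)
  set G : ℝ → ℂ := (Icc (-1:ℝ) 1).indicator 1 - F
  have hF_supp : ∀ x ∉ Icc (-1:ℝ) 1, F x = 0 := fun x hx ↦ by simp [F, hf_supp x hx]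
  have hG_supp : ∀ x ∉ Icc (-1:ℝ) 1, G x = 0 := fun x hx ↦ by simp [G, hx, hF_supp x hx]
  -- `f` is integrable because its integral is not the junk value `0`
  have hF_int : Integrable F :=
    (integrable_of_intervalIntegral_ne_zero (by norm_num) hf_supp (by simp [hf_int])).ofReal
  have hg_eq : ∀ u, (g u : ℂ) = G u := fun u ↦ by
    rw [hg]
    split_ifs with hu
    · simp [G, F, hu]
    · simp [G, F, hu, hf_supp u hu]
  have hM_eq : ∀ x, (M x : ℂ) = crossCorrelation F G x := fun x ↦ by
    rw [hM, intervalIntegral_eq_integral_of_forall_notMem (by norm_num) fun t ht ↦ by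
      simp [hf_supp t ht], ← integral_complex_ofReal]
    simp [crossCorrelation, F, hg_eq]
  have hcoeff : ∀ h : ℝ → ℂ, (∀ x ∉ Icc (-2:ℝ) 2, h x = 0) →
      ∫ x in (-2:ℝ)..2, Complex.exp (-(π * Complex.I / 2) * k * x) * h x = 𝓕 h (k / 4) :=
    fun h hh ↦ by
      convert Real.intervalIntegral_exp_mul_eq_fourier (by norm_num) hh k using 1 <;> norm_num
  have hfhat_eq : fhat k = 1 / 4 * 𝓕 F (k / 4) := by
    rw [hfhat, hcoeff F fun x hx ↦ hF_supp x fun h ↦ hx ⟨by linarith [h.1], by linarith [h.2]⟩]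
  have hMhat_eq : Mhat k = 1 / 4 * 𝓕 (crossCorrelation F G) (k / 4) := by
    simp_rw [hMhat, hM_eq]
    rw [hcoeff _ fun x hx ↦ crossCorrelation_eq_zero_of_notMem_Icc hF_supp hG_supp
      (by norm_num at hx ⊢; exact hx)]
  have hsin : sin (2 * π * 1 * (k / 4)) / (π * (k / 4)) = 4 / (k * π) * sin (k * π / 2) := by
    rw [show 2 * π * 1 * (k / 4) = k * π / 2 by ring]
    field_simp
  rw [hMhat_eq, Real.fourier_crossCorrelation_indicator_sub hF_int zero_le_one (by simp [hk]),
    hsin, hfhat_eq, Complex.sq_norm, ← Complex.mul_conj]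
  simp only [map_mul, map_div₀, map_one, map_ofNat]
  ring

theorem exp_fourier_identity (f g M : ℝ → ℝ)
    (hf_meas : Measurable f)
    (hf01 : ∀ x ∈ Icc (-1:ℝ) 1, 0 ≤ f x ∧ f x ≤ 1)
    (hf_supp : ∀ x, x ∉ Icc (-1:ℝ) 1 → f x = 0)
    (hf_int : ∫ x in (-1:ℝ)..1, f x = 1)
    (hg : ∀ x, g x = if x ∈ Icc (-1:ℝ) 1 then 1 - f x else 0)
    (hM : ∀ x, M x = ∫ t in (-1:ℝ)..1, f t * g (x + t))
    (fhat Mhat : ℤ → ℂ)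
    (hfhat : ∀ k : ℤ, fhat k =
      (1/4 : ℂ) * ∫ x in (-2:ℝ)..2, Complex.exp (-(Real.pi * Complex.I / 2) * k * x) * (f x : ℂ))
    (hMhat : ∀ k : ℤ, Mhat k =
      (1/4 : ℂ) * ∫ x in (-2:ℝ)..2, Complex.exp (-(Real.pi * Complex.I / 2) * k * x) * (M x : ℂ)) :
    ∀ k : ℤ, k ≠ 0 →
      Mhat k = ((4 / ((k : ℝ) * Real.pi) * Real.sin ((k : ℝ) * Real.pi / 2) : ℝ) : ℂ)
          * (starRingEnd ℂ) (fhat k) - 4 * ((‖fhat k‖)^2 : ℝ) :=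
  exp_fourier_identity_general f g M hf_supp hf_int hg hM fhat Mhat hfhat hMhat
end

section
/- For every integer m ≥ 1, B_m = −(4/(mπ)) sin(mπ/2) · b_m; in particular B_{2m} = 0 for all m ≥ 1. -/
open Real MeasureTheory Set

/-!
`M` is the cross-correlation of `f` and `g`. By Fubini and the substitution `u = x + t`, its sine
transform at frequency `c` is `S_g C_f - C_g S_f`, where `S_h`, `C_h` are the sine and cosine
transforms of `h`. Since `f + g` is the indicator of `[-1, 1]`, we have `S_g = -S_f` and
`C_g = 2 sin c / c - C_f`, so the `C_f` terms cancel and the sine transform of `M` is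
`-(2 sin c / c) S_f`. With `c = π m / 2` this is the claimed relation, and `sin (m π) = 0`.
-/

lemma integrable_of_abs_le_of_forall_notMem_Icc {h : ℝ → ℝ} {a b C : ℝ}
    (hm : AEStronglyMeasurable h) (hC : ∀ x ∈ Icc a b, |h x| ≤ C)
    (h0 : ∀ x ∉ Icc a b, h x = 0) : Integrable h :=
  (Measure.integrableOn_of_bounded (by simp) hm
    (ae_restrict_of_forall_mem measurableSet_Icc hC)).integrable_of_forall_notMem_eq_zero h0

lemma intervalIntegral_eq_integral_of_forall_notMem_Icc {h : ℝ → ℝ} {a b : ℝ} (hab : a ≤ b)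
    (h0 : ∀ x ∉ Icc a b, h x = 0) : ∫ x in a..b, h x = ∫ x, h x := by
  rw [intervalIntegral.integral_of_le hab, ← integral_Icc_eq_integral_Ioc,
    setIntegral_eq_integral_of_forall_compl_eq_zero h0]

section

variable {f g : ℝ → ℝ}

lemma MeasureTheory.Integrable.sin_mul (hg : Integrable g) (c : ℝ) :
    Integrable fun x => sin (c * x) * g x :=
  hg.bdd_mul (c := 1) (by fun_prop) (ae_of_all _ fun x => by simpa using abs_sin_le_one (c * x))

lemma MeasureTheory.Integrable.cos_mul (hg : Integrable g) (c : ℝ) :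
    Integrable fun x => cos (c * x) * g x :=
  hg.bdd_mul (c := 1) (by fun_prop) (ae_of_all _ fun x => by simpa using abs_cos_le_one (c * x))

lemma mul_comp_add_eq_zero_of_forall_notMem_Icc {a b a' b' x : ℝ}
    (hf0 : ∀ t ∉ Icc a b, f t = 0) (hg0 : ∀ u ∉ Icc a' b', g u = 0) (hx : x ∉ Icc (a' - b) (b' - a))
    (t : ℝ) : f t * g (x + t) = 0 := by
  by_cases ht : t ∈ Icc a b
  · rw [hg0 _ fun h => hx ⟨by linarith [h.1, ht.2], by linarith [h.2, ht.1]⟩, mul_zero]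
  · rw [hf0 t ht, zero_mul]

lemma integrable_mul_comp_add (hf : Integrable f) (hg : Integrable g) :
    Integrable (fun p : ℝ × ℝ => f p.2 * g (p.1 + p.2)) (volume.prod volume) :=
  (measurePreserving_prod_add_swap_right volume volume).integrable_comp_of_integrable
    (hf.mul_prod hg)

lemma integral_sin_mul_comp_add_right (hg : Integrable g) (c t : ℝ) :
    ∫ x, sin (c * x) * g (x + t) =
      cos (c * t) * (∫ u, sin (c * u) * g u) - sin (c * t) * ∫ u, cos (c * u) * g u := by
  have hshift : ∫ x, sin (c * x) * g (x + t) = ∫ u, sin (c * (u - t)) * g u := by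
    simpa using integral_add_right_eq_self (fun u => sin (c * (u - t)) * g u) t
  rw [hshift, ← integral_const_mul, ← integral_const_mul,
    ← integral_sub ((hg.sin_mul c).const_mul _) ((hg.cos_mul c).const_mul _)]
  congr with u
  rw [mul_sub, sin_sub]
  ring

theorem integral_sin_mul_correlation (hf : Integrable f) (hg : Integrable g) (c : ℝ) :
    ∫ x, sin (c * x) * ∫ t, f t * g (x + t) =
      (∫ u, sin (c * u) * g u) * (∫ t, cos (c * t) * f t) -
        (∫ u, cos (c * u) * g u) * ∫ t, sin (c * t) * f t := by
  have hint : Integrable (Function.uncurry fun x t => sin (c * x) * (f t * g (x + t)))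
      (volume.prod volume) :=
    (integrable_mul_comp_add hf hg).bdd_mul (c := 1) (by fun_prop)
      (ae_of_all _ fun p => by simpa using abs_sin_le_one (c * p.1))
  calc ∫ x, sin (c * x) * ∫ t, f t * g (x + t)
      = ∫ t, ∫ x, sin (c * x) * (f t * g (x + t)) := by
        simp_rw [← integral_const_mul]
        exact integral_integral_swap hint
    _ = ∫ t, ((∫ u, sin (c * u) * g u) * (cos (c * t) * f t) -
          (∫ u, cos (c * u) * g u) * (sin (c * t) * f t)) := by
        congr with t
        have hcomm : ∀ x, sin (c * x) * (f t * g (x + t)) = f t * (sin (c * x) * g (x + t)) :=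
          fun x => by ring
        simp_rw [hcomm, integral_const_mul, integral_sin_mul_comp_add_right hg]
        ring
    _ = _ := by
        rw [integral_sub ((hf.cos_mul c).const_mul _) ((hf.sin_mul c).const_mul _),
          integral_const_mul, integral_const_mul]

lemma integral_mul_indicator_one_sub {a b : ℝ} (hab : a ≤ b) {φ : ℝ → ℝ} (hφ : Continuous φ)
    (hf : Integrable f) (hf0 : ∀ x ∉ Icc a b, f x = 0) :
    ∫ x, φ x * (Icc a b).indicator (1 - f) x = (∫ x in a..b, φ x) - ∫ x, φ x * f x := by
  simp_rw [← indicator_mul_right, integral_indicator measurableSet_Icc, Pi.sub_apply,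
    Pi.one_apply, mul_one_sub]
  rw [integral_sub (hφ.integrableOn_Icc)
      (hf.integrableOn.continuousOn_mul hφ.continuousOn isCompact_Icc),
    setIntegral_eq_integral_of_forall_compl_eq_zero (f := fun x => φ x * f x)
      fun x hx => by rw [hf0 x hx, mul_zero],
    intervalIntegral.integral_of_le hab, integral_Icc_eq_integral_Ioc]

lemma integral_sin_mul_neg_one_one (c : ℝ) : ∫ x in (-1:ℝ)..1, sin (c * x) = 0 := by
  have hodd := intervalIntegral.integral_comp_neg (a := -1) (b := 1) fun x => sin (c * x)
  simp only [mul_neg, sin_neg, intervalIntegral.integral_neg, neg_neg] at hodd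
  linarith

lemma integral_cos_mul_neg_one_one {c : ℝ} (hc : c ≠ 0) :
    ∫ x in (-1:ℝ)..1, cos (c * x) = 2 * sin c / c := by
  rw [intervalIntegral.integral_comp_mul_left (fun x => cos x) hc, integral_cos, mul_neg,
    mul_one, sin_neg, smul_eq_mul]
  field_simp
  ring

theorem integral_sin_mul_correlation_indicator_one_sub (hf : Integrable f)
    (hf0 : ∀ x ∉ Icc (-1:ℝ) 1, f x = 0) {c : ℝ} (hc : c ≠ 0) :
    ∫ x, sin (c * x) * ∫ t, f t * (Icc (-1:ℝ) 1).indicator (1 - f) (x + t) =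
      -(2 * sin c / c) * ∫ t, sin (c * t) * f t := by
  have hg : Integrable ((Icc (-1:ℝ) 1).indicator (1 - f)) :=
    (continuous_const.integrableOn_Icc.sub hf.integrableOn).integrable_indicator measurableSet_Icc
  rw [integral_sin_mul_correlation hf hg,
    integral_mul_indicator_one_sub (by norm_num) (by fun_prop) hf hf0,
    integral_mul_indicator_one_sub (by norm_num) (by fun_prop) hf hf0,
    integral_sin_mul_neg_one_one, integral_cos_mul_neg_one_one hc]
  ring

end

theorem sine_coeff_of_M_general (f g M : ℝ → ℝ)
    (hf_meas : Measurable f)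
    (hf01 : ∀ x ∈ Icc (-1:ℝ) 1, 0 ≤ f x ∧ f x ≤ 1)
    (hf_supp : ∀ x, x ∉ Icc (-1:ℝ) 1 → f x = 0)
    (hg : ∀ x, g x = if x ∈ Icc (-1:ℝ) 1 then 1 - f x else 0)
    (hM : ∀ x, M x = ∫ t in (-1:ℝ)..1, f t * g (x + t))
    (b B : ℕ → ℝ)
    (hb : ∀ m : ℕ, 1 ≤ m → b m = (1/2) * ∫ x in (-2:ℝ)..2, Real.sin (π * m * x / 2) * f x)
    (hB : ∀ m : ℕ, 1 ≤ m → B m = (1/2) * ∫ x in (-2:ℝ)..2, Real.sin (π * m * x / 2) * M x) :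
    (∀ m : ℕ, 1 ≤ m → B m = -(4 / ((m:ℝ) * π)) * Real.sin ((m:ℝ) * π / 2) * b m) ∧
    (∀ m : ℕ, 1 ≤ m → B (2 * m) = 0) := by
  have hf : Integrable f := integrable_of_abs_le_of_forall_notMem_Icc
    hf_meas.aestronglyMeasurable (fun x hx => abs_le.2 ⟨by linarith [(hf01 x hx).1], (hf01 x hx).2⟩)
    hf_supp
  have hg_eq : g = (Icc (-1:ℝ) 1).indicator (1 - f) := funext fun x => by
    rw [hg, indicator_apply]; rfl
  have hM_eq : M = fun x => ∫ t, f t * g (x + t) := funext fun x => by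
    rw [hM, intervalIntegral_eq_integral_of_forall_notMem_Icc (by norm_num)]
    exact fun t ht => by rw [hf_supp t ht, zero_mul]
  have hM_supp : ∀ x ∉ Icc (-2:ℝ) 2, M x = 0 := fun x hx => by
    rw [hM_eq]
    refine integral_eq_zero_of_ae (ae_of_all _ fun t => ?_)
    exact mul_comp_add_eq_zero_of_forall_notMem_Icc hf_supp (fun u hu => by rw [hg, if_neg hu])
      (by norm_num at hx ⊢; exact hx) t
  have key : ∀ m : ℕ, 1 ≤ m → B m = -(4 / ((m:ℝ) * π)) * Real.sin ((m:ℝ) * π / 2) * b m := by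
    intro m hm
    have hc : π * m / 2 ≠ 0 := by positivity
    have harg : ∀ x, π * m * x / 2 = π * m / 2 * x := fun x => by ring
    rw [hB m hm, hb m hm, intervalIntegral_eq_integral_of_forall_notMem_Icc (by norm_num)
        fun x hx => by rw [hM_supp x hx, mul_zero],
      intervalIntegral_eq_integral_of_forall_notMem_Icc (by norm_num)
        fun x hx => by rw [hf_supp x fun h => hx ⟨by linarith [h.1], by linarith [h.2]⟩, mul_zero]]
    simp_rw [harg, hM_eq, hg_eq]
    rw [integral_sin_mul_correlation_indicator_one_sub hf hf_supp hc, mul_comm π]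
    field_simp
    ring
  refine ⟨key, fun m hm => ?_⟩
  rw [key (2 * m) (by omega), Nat.cast_mul, Nat.cast_two,
    show (2 : ℝ) * m * π / 2 = m * π by ring, sin_nat_mul_pi]
  ring

theorem sine_coeff_of_M (f g M : ℝ → ℝ)
    (hf_meas : Measurable f)
    (hf01 : ∀ x ∈ Icc (-1:ℝ) 1, 0 ≤ f x ∧ f x ≤ 1)
    (hf_supp : ∀ x, x ∉ Icc (-1:ℝ) 1 → f x = 0)
    (hf_int : ∫ x in (-1:ℝ)..1, f x = 1)
    (hg : ∀ x, g x = if x ∈ Icc (-1:ℝ) 1 then 1 - f x else 0)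
    (hM : ∀ x, M x = ∫ t in (-1:ℝ)..1, f t * g (x + t))
    (b B : ℕ → ℝ)
    (hb : ∀ m : ℕ, 1 ≤ m → b m = (1/2) * ∫ x in (-2:ℝ)..2, Real.sin (π * m * x / 2) * f x)
    (hB : ∀ m : ℕ, 1 ≤ m → B m = (1/2) * ∫ x in (-2:ℝ)..2, Real.sin (π * m * x / 2) * M x) :
    (∀ m : ℕ, 1 ≤ m → B m = -(4 / ((m:ℝ) * π)) * Real.sin ((m:ℝ) * π / 2) * b m) ∧
    (∀ m : ℕ, 1 ≤ m → B (2 * m) = 0) :=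
  sine_coeff_of_M_general f g M hf_meas hf01 hf_supp hg hM b B hb hB
end
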